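/- arXiv:1711.01900 — 2 statements merged into one kernel-verified Lean document; each statement's English description precedes it below -/
import Mathlib

section
/- For every α ≥ 0 and every real r ∈ [α, 4α] there exist δ ∈ [0,1] and u, u' ∈ Ũ such that δ ≤ e^{r−4α} and D_α·k_δ·D_α = u·D(r, 2α−r, −2α)·u'. -/
open Matrix

/-- `D(a,b,c) = diag(eᵃ, eᵇ, e^c)` in `SL₃(ℝ)` (for `a+b+c=0`). -/
noncomputable def Dmat (a b c : ℝ) : Matrix (Fin 3) (Fin 3) ℝ :=
  Matrix.diagonal ![Real.exp a, Real.exp b, Real.exp c]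

/-- The rotation `k_δ ∈ SO(3)` for `δ ∈ [0,1]`. -/
noncomputable def kMat (δ : ℝ) : Matrix (Fin 3) (Fin 3) ℝ :=
  !![δ, -Real.sqrt (1 - δ ^ 2), 0;
     Real.sqrt (1 - δ ^ 2), δ, 0;
     0, 0, 1]

/-- The block-diagonal `(2+1)` subgroup `Ũ` of `SO(3)`. -/
def Utilde : Set (Matrix (Fin 3) (Fin 3) ℝ) :=
  {A | Aᵀ * A = 1 ∧ A.det = 1 ∧ A 0 2 = 0 ∧ A 1 2 = 0 ∧ A 2 0 = 0 ∧ A 2 1 = 0}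

lemma diag3 (X Y Z : ℝ) :
    Matrix.diagonal ![X, Y, Z] = !![X, 0, 0; 0, Y, 0; 0, 0, Z] := by
  ext i j
  fin_cases i <;> fin_cases j <;> simp [Matrix.diagonal_apply, Matrix.vecHead, Matrix.vecTail]

lemma trans3 (p q : ℝ) :
    (!![p, -q, 0; q, p, 0; 0, 0, 1] : Matrix (Fin 3) (Fin 3) ℝ)ᵀ =
      !![p, q, 0; -q, p, 0; 0, 0, 1] := by
  ext i j
  fin_cases i <;> fin_cases j <;> rfl

lemma mem_aux (p q : ℝ) (h : p ^ 2 + q ^ 2 = 1) :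
    !![p, -q, 0; q, p, 0; 0, 0, 1] ∈ Utilde := by
  refine ⟨?_, ?_, by simp, by simp, by simp, by simp⟩
  · rw [trans3, Matrix.mul_fin_three, Matrix.one_fin_three]
    ext i j
    fin_cases i <;> fin_cases j <;>
      simp [Matrix.vecHead, Matrix.vecTail] <;>
      (first | ring1 | linear_combination h | linear_combination -h)
  · rw [Matrix.det_fin_three]
    simp
    linear_combination h

lemma eq_aux (δ s₀ p q X Y Z E2 Em : ℝ)
    (h00 : E2 * δ * E2 = X * p ^ 2 - Y * q ^ 2)
    (h01 : E2 * s₀ * Em = (X + Y) * (p * q))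
    (h11 : Em * δ * Em = Y * p ^ 2 - X * q ^ 2)
    (h22 : Em * Em = Z) :
    Matrix.diagonal ![E2, Em, Em] * !![δ, -s₀, 0; s₀, δ, 0; 0, 0, 1] *
        Matrix.diagonal ![E2, Em, Em] =
      !![p, -q, 0; q, p, 0; 0, 0, 1] * Matrix.diagonal ![X, Y, Z] *
        !![p, -q, 0; q, p, 0; 0, 0, 1] := by
  rw [diag3, diag3]
  simp only [Matrix.mul_fin_three]
  ext i j
  fin_cases i <;> fin_cases j <;>
    simp [Matrix.vecHead, Matrix.vecTail] <;>
    (first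
      | ring1
      | linear_combination h00
      | linear_combination h01
      | linear_combination -h01
      | linear_combination h11
      | linear_combination h22
      | linear_combination -h22)

/-- Lemma (spheres distorted): for every `r ∈ [α, 4α]` there are `δ ∈ [0,1]` with
`δ ≤ e^{r-4α}` and `u, u' ∈ Ũ` such that `D_α k_δ D_α = u D(r, 2α-r, -2α) u'`. -/
theorem spheres_distorted (α : ℝ) (hα : 0 ≤ α) (r : ℝ) (hr₁ : α ≤ r) (hr₂ : r ≤ 4 * α) :
    ∃ δ : ℝ, 0 ≤ δ ∧ δ ≤ 1 ∧ δ ≤ Real.exp (r - 4 * α) ∧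
      ∃ u ∈ Utilde, ∃ u' ∈ Utilde,
        Dmat (2 * α) (-α) (-α) * kMat δ * Dmat (2 * α) (-α) (-α) =
          u * Dmat r (2 * α - r) (-(2 * α)) * u' := by
  obtain ⟨x, hxdef⟩ : ∃ x, x = Real.exp r := ⟨_, rfl⟩
  obtain ⟨y, hydef⟩ : ∃ y, y = Real.exp (2*α - r) := ⟨_, rfl⟩
  obtain ⟨a, hadef⟩ : ∃ a, a = Real.exp (4*α) := ⟨_, rfl⟩
  obtain ⟨b, hbdef⟩ : ∃ b, b = Real.exp α := ⟨_, rfl⟩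
  obtain ⟨c, hcdef⟩ : ∃ c, c = Real.exp (-(2*α)) := ⟨_, rfl⟩
  have hx : 0 < x := hxdef ▸ Real.exp_pos r
  have hy : 0 < y := hydef ▸ Real.exp_pos _
  have ha : 0 < a := hadef ▸ Real.exp_pos _
  have hb : 0 < b := hbdef ▸ Real.exp_pos _
  have hc : 0 < c := hcdef ▸ Real.exp_pos _
  have hxy : x * y = b * b := by
    rw [hxdef, hydef, hbdef, ← Real.exp_add, ← Real.exp_add]; ring_nf
  have hac : a * c = b * b := by
    rw [hadef, hcdef, hbdef, ← Real.exp_add, ← Real.exp_add]; ring_nf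
  have hyx : y ≤ x := by rw [hxdef, hydef]; exact Real.exp_le_exp.2 (by linarith)
  have hxa : x ≤ a := by rw [hxdef, hadef]; exact Real.exp_le_exp.2 (by linarith)
  have hcy : c ≤ y := by rw [hcdef, hydef]; exact Real.exp_le_exp.2 (by linarith)
  obtain ⟨δ, hδdef⟩ : ∃ d, d = (x - y) / (a - c) := ⟨_, rfl⟩
  have hδ0 : 0 ≤ δ := hδdef ▸ div_nonneg (by linarith) (by linarith)
  have key : δ * (a - c) = x - y ∧ δ ≤ 1 ∧ δ ≤ Real.exp (r - 4 * α) := by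
    rcases eq_or_lt_of_le (show c ≤ a by linarith) with hca | hca
    · have hα0 : α = 0 := by
        have h := Real.exp_eq_exp.1 (show Real.exp (-(2*α)) = Real.exp (4*α) by
          rw [← hcdef, ← hadef, hca])
        linarith
      have hr0 : r = 0 := le_antisymm (by linarith) (by linarith)
      have hxyeq : x = y := by rw [hxdef, hydef, hα0, hr0]; norm_num
      have hδz : δ = 0 := by rw [hδdef, hxyeq]; simp
      refine ⟨by rw [hδz, hxyeq]; ring, by rw [hδz]; norm_num,
        by rw [hδz]; exact (Real.exp_pos _).le⟩
    · have hne : a - c ≠ 0 := ne_of_gt (by linarith)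
      refine ⟨hδdef ▸ div_mul_cancel₀ _ hne,
        hδdef ▸ (div_le_one (by linarith)).2 (by linarith), ?_⟩
      rw [hδdef, div_le_iff₀ (by linarith)]
      have h1 : Real.exp (r - 4*α) * a = x := by
        rw [hadef, hxdef, ← Real.exp_add]; ring_nf
      have h2 : Real.exp (r - 4*α) * c = Real.exp (r - 6*α) := by
        rw [hcdef, ← Real.exp_add]; ring_nf
      have h3 : Real.exp (r - 6*α) ≤ y := by
        rw [hydef]; exact Real.exp_le_exp.2 (by linarith)
      nlinarith [h1, h2, h3]
  obtain ⟨hδkey, hδ1, hδe⟩ := key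
  obtain ⟨s₀, hs₀def⟩ : ∃ s, s = Real.sqrt (1 - δ ^ 2) := ⟨_, rfl⟩
  have hs₀sq : s₀ ^ 2 = 1 - δ ^ 2 := by
    rw [hs₀def]; exact Real.sq_sqrt (by nlinarith)
  have hs₀0 : 0 ≤ s₀ := hs₀def ▸ Real.sqrt_nonneg _
  have hxys : 0 < x + y := by linarith
  obtain ⟨C, hCdef⟩ : ∃ C, C = (a + c) * δ / (x + y) := ⟨_, rfl⟩
  have hCkey : C * (x + y) = (a + c) * δ := hCdef ▸ div_mul_cancel₀ _ (ne_of_gt hxys)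
  have hC0 : 0 ≤ C := hCdef ▸ div_nonneg (mul_nonneg (by linarith) hδ0) hxys.le
  obtain ⟨S, hSdef⟩ : ∃ S, S = 2 * b * s₀ / (x + y) := ⟨_, rfl⟩
  have hSkey : S * (x + y) = 2 * b * s₀ := hSdef ▸ div_mul_cancel₀ _ (ne_of_gt hxys)
  have hsq : (δ * (a - c)) ^ 2 = (x - y) ^ 2 := by rw [hδkey]
  have h4 : 4 * (b * b) * s₀ ^ 2 + ((a + c) * δ) ^ 2 = (x + y) ^ 2 := by
    linear_combination (4 * b * b) * hs₀sq - 4 * hxy + 4 * δ ^ 2 * hac + hsq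
  have hSC : S ^ 2 + C ^ 2 = 1 := by
    have h5 : (S * (x + y)) ^ 2 + (C * (x + y)) ^ 2 = (x + y) ^ 2 := by
      rw [hSkey, hCkey]; linear_combination h4
    have h6 : (S ^ 2 + C ^ 2) * (x + y) ^ 2 = 1 * (x + y) ^ 2 := by
      linear_combination h5
    exact mul_right_cancel₀ (pow_ne_zero 2 hxys.ne') h6
  have hC1 : C ≤ 1 := by nlinarith [sq_nonneg S]
  obtain ⟨c₀, hc₀def⟩ : ∃ c₀, c₀ = Real.sqrt ((1 + C) / 2) := ⟨_, rfl⟩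
  have hc₀sq : c₀ ^ 2 = (1 + C) / 2 := by
    rw [hc₀def]; exact Real.sq_sqrt (by linarith)
  have hc₀pos : 0 < c₀ := hc₀def ▸ Real.sqrt_pos.2 (by linarith)
  obtain ⟨s₁, hs₁def⟩ : ∃ s₁, s₁ = S / (2 * c₀) := ⟨_, rfl⟩
  have h2cs : s₁ * (2 * c₀) = S := hs₁def ▸ div_mul_cancel₀ _ (by positivity)
  have hs₁sq : s₁ ^ 2 = (1 - C) / 2 := by
    have h7 : s₁ ^ 2 * (2 * c₀) ^ 2 = S ^ 2 := by rw [← mul_pow, h2cs]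
    have h8 : (2 * c₀) ^ 2 = 2 * (1 + C) := by rw [mul_pow, hc₀sq]; ring
    have h12 : s₁ ^ 2 * (2 * (1 + C)) = (1 - C) / 2 * (2 * (1 + C)) :=
      calc s₁ ^ 2 * (2 * (1 + C)) = s₁ ^ 2 * (2 * c₀) ^ 2 := by rw [h8]
        _ = S ^ 2 := h7
        _ = (1 - C) / 2 * (2 * (1 + C)) := by linear_combination hSC
    exact mul_right_cancel₀ (by positivity) h12
  have hunit : c₀ ^ 2 + s₁ ^ 2 = 1 := by rw [hc₀sq, hs₁sq]; ring
  have hA1 : x * c₀ ^ 2 - y * s₁ ^ 2 = a * δ := by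
    rw [hc₀sq, hs₁sq]; linear_combination (-(1:ℝ)/2) * hδkey + (1/2) * hCkey
  have hA2 : (x + y) * (c₀ * s₁) = b * s₀ := by
    linear_combination ((x + y) / 2) * h2cs + (1/2) * hSkey
  have hA3 : y * c₀ ^ 2 - x * s₁ ^ 2 = c * δ := by
    rw [hc₀sq, hs₁sq]; linear_combination (1/2) * hδkey + (1/2) * hCkey
  have hexp2a : Real.exp (2*α) * Real.exp (2*α) = a := by
    rw [hadef, ← Real.exp_add]; ring_nf
  have hexpb : Real.exp (2*α) * Real.exp (-α) = b := by
    rw [hbdef, ← Real.exp_add]; ring_nf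
  have hexpc : Real.exp (-α) * Real.exp (-α) = c := by
    rw [hcdef, ← Real.exp_add]; ring_nf
  have h00 : Real.exp (2*α) * δ * Real.exp (2*α) = x * c₀ ^ 2 - y * s₁ ^ 2 := by
    linear_combination δ * hexp2a - hA1
  have h01 : Real.exp (2*α) * s₀ * Real.exp (-α) = (x + y) * (c₀ * s₁) := by
    linear_combination s₀ * hexpb - hA2
  have h11 : Real.exp (-α) * δ * Real.exp (-α) = y * c₀ ^ 2 - x * s₁ ^ 2 := by
    linear_combination δ * hexpc - hA3
  refine ⟨δ, hδ0, hδ1, hδe, _, mem_aux c₀ s₁ hunit, _, mem_aux c₀ s₁ hunit, ?_⟩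
  rw [hs₀def] at h01
  have hmain := eq_aux δ (Real.sqrt (1 - δ ^ 2)) c₀ s₁ x y c
      (Real.exp (2*α)) (Real.exp (-α))
      h00 h01 h11 hexpc
  simp only [Dmat, kMat]
  rw [hxdef, hydef, hcdef] at hmain
  exact hmain
end

section
/- Let G be a second countable locally compact group with left Haar measure, ℓ a length function on G, Γ ⊆ G a discrete subgroup, and Ω ⊆ G a Borel set such that the map Ω × Γ → G, (ω,γ) ↦ ωγ, is a bijection. For g ∈ G and ω ∈ Ω let g·ω ∈ Ω and α(g,ω) ∈ Γ be the unique elements with gω = (g·ω)·α(g,ω). Assume: (i) there is s₀ > 0 with I := ∫_Ω e^{s₀·ℓ(ω)} dω < ∞; and (ii) ℓ(ω) ≤ inf_{γ∈Γ} ℓ(ωγ) + 1 for every ω ∈ Ω. Then there is C > 0 (one may take C = e^{s₀/2}·I) such that for every s ∈ (0, s₀/2] and every g ∈ G: ∫_Ω e^{s·ℓ(α(g,ω))} dω ≤ C·e^{2s·ℓ(g)}. -/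
/-!
Write `g ω = ω' γ` with `ω' = g·ω ∈ Ω` and `γ = α(g,ω) ∈ Γ`. Near-minimality of `ω'` in its
`Γ`-orbit gives `ℓ ω' ≤ ℓ (g ω) + 1 ≤ ℓ g + ℓ ω + 1`, so `γ = ω'⁻¹ g ω` has length at most
`2 ℓ g + 2 ℓ ω + 1`. For `2 s ≤ s₀` this yields `e^{s ℓ γ} ≤ e^{2 s ℓ g + s} e^{s₀ ℓ ω}`, and
integrating over `Ω` bounds the integral by `e^{s} I e^{2 s ℓ g} ≤ e^{s₀/2} I e^{2 s ℓ g}`.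
-/

open MeasureTheory Filter Real Topology

/-- A length function on a topological group. -/
structure IsLengthFunction {G : Type*} [Group G] [TopologicalSpace G] (ℓ : G → ℝ) : Prop where
  nonneg : ∀ g, 0 ≤ ℓ g
  bddOnCompact : ∀ Q : Set G, IsCompact Q → ∃ M : ℝ, ∀ g ∈ Q, ℓ g ≤ M
  symm : ∀ g, ℓ g⁻¹ = ℓ g
  subadd : ∀ g h, ℓ (g * h) ≤ ℓ g + ℓ h

namespace IsLengthFunction

variable {G : Type*} [Group G] [TopologicalSpace G] {ℓ : G → ℝ}

theorem le_of_mul_eq_mul (hℓ : IsLengthFunction ℓ) {g ω ω' γ : G} (h : g * ω = ω' * γ)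
    (hmin : ℓ ω' ≤ ℓ (ω' * γ) + 1) : ℓ γ ≤ 2 * ℓ g + 2 * ℓ ω + 1 := by
  have hγ : γ = ω'⁻¹ * (g * ω) := by rw [h, inv_mul_cancel_left]
  have hgω := hℓ.subadd g ω
  have hω'γ := hℓ.subadd ω'⁻¹ (g * ω)
  rw [← h] at hmin
  rw [hγ]
  linarith [hℓ.symm ω']

theorem exp_mul_le_of_mul_eq_mul (hℓ : IsLengthFunction ℓ) {g ω ω' γ : G}
    (h : g * ω = ω' * γ) (hmin : ℓ ω' ≤ ℓ (ω' * γ) + 1) {s s₀ : ℝ} (hs : 0 ≤ s)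
    (hss : s ≤ s₀ / 2) : exp (s * ℓ γ) ≤ exp (2 * s * ℓ g + s) * exp (s₀ * ℓ ω) := by
  have hγ := mul_le_mul_of_nonneg_left (hℓ.le_of_mul_eq_mul h hmin) hs
  have hω := mul_le_mul_of_nonneg_right (show 2 * s ≤ s₀ by linarith) (hℓ.nonneg ω)
  rw [← exp_add]
  exact exp_le_exp.2 (by linarith)

end IsLengthFunction

theorem cocycle_exponentially_integrable_general {G : Type*}
    [Group G] [TopologicalSpace G]
    [MeasurableSpace G]
    (μ : Measure G)
    (ℓ : G → ℝ) (hℓ : IsLengthFunction ℓ)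
    (Γ : Subgroup G)
    (Ω : Set G) (hΩmeas : MeasurableSet Ω)
    (act : G → G → G) (coc : G → G → Γ)
    (hact : ∀ g : G, ∀ ω ∈ Ω, act g ω ∈ Ω)
    (hdecomp : ∀ g : G, ∀ ω ∈ Ω, g * ω = act g ω * (coc g ω : G))
    (s₀ : ℝ) (I : ℝ)
    (hI : ∫⁻ ω in Ω, ENNReal.ofReal (Real.exp (s₀ * ℓ ω)) ∂μ = ENNReal.ofReal I)
    (hmin : ∀ ω ∈ Ω, ∀ γ : Γ, ℓ ω ≤ ℓ (ω * (γ : G)) + 1) :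
    ∃ C : ℝ, 0 < C ∧
      ∀ s : ℝ, 0 < s → s ≤ s₀ / 2 → ∀ g : G,
        ∫⁻ ω in Ω, ENNReal.ofReal (Real.exp (s * ℓ (coc g ω : G))) ∂μ ≤
          ENNReal.ofReal (C * Real.exp (2 * s * ℓ g)) := by
  -- `max I 1` rather than `I`: only `ENNReal.ofReal I` is pinned down, so `I` may be `≤ 0`.
  refine ⟨exp (s₀ / 2) * max I 1, by positivity, fun s hs hss g => ?_⟩
  have hpoint : ∀ ω ∈ Ω, ENNReal.ofReal (exp (s * ℓ (coc g ω))) ≤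
      ENNReal.ofReal (exp (2 * s * ℓ g + s)) * ENNReal.ofReal (exp (s₀ * ℓ ω)) := by
    intro ω hω
    rw [← ENNReal.ofReal_mul (exp_pos _).le]
    exact ENNReal.ofReal_le_ofReal <| hℓ.exp_mul_le_of_mul_eq_mul (hdecomp g ω hω)
      (hmin _ (hact g ω hω) _) hs.le hss
  have hconst : exp s * I ≤ exp (s₀ / 2) * max I 1 :=
    calc exp s * I ≤ exp s * max I 1 := by gcongr; exact le_max_left _ _
      _ ≤ exp (s₀ / 2) * max I 1 := by gcongr
  calc ∫⁻ ω in Ω, ENNReal.ofReal (exp (s * ℓ (coc g ω))) ∂μ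
      ≤ ∫⁻ ω in Ω, ENNReal.ofReal (exp (2 * s * ℓ g + s)) *
          ENNReal.ofReal (exp (s₀ * ℓ ω)) ∂μ := setLIntegral_mono' hΩmeas hpoint
    _ = ENNReal.ofReal (exp (2 * s * ℓ g + s) * I) := by
        rw [lintegral_const_mul' _ _ ENNReal.ofReal_ne_top, hI,
          ENNReal.ofReal_mul (exp_pos _).le]
    _ ≤ ENNReal.ofReal (exp (s₀ / 2) * max I 1 * exp (2 * s * ℓ g)) := by
        apply ENNReal.ofReal_le_ofReal
        rw [exp_add, mul_comm (exp _) (exp s), mul_right_comm]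
        gcongr

/-- Exponential integrability of the cocycle `α(g,ω)` associated to a fundamental domain
whose elements almost minimize the length in their `Γ`-orbit. -/
theorem cocycle_exponentially_integrable {G : Type*}
    [Group G] [TopologicalSpace G] [IsTopologicalGroup G] [LocallyCompactSpace G]
    [SecondCountableTopology G] [MeasurableSpace G] [BorelSpace G]
    (μ : Measure G) [μ.IsHaarMeasure]
    (ℓ : G → ℝ) (hℓ : IsLengthFunction ℓ)
    (Γ : Subgroup G) [DiscreteTopology ↥Γ]
    (Ω : Set G) (hΩmeas : MeasurableSet Ω)
    (hbij : ∀ g : G, ∃! p : Ω × Γ, (p.1 : G) * (p.2 : G) = g)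
    (act : G → G → G) (coc : G → G → Γ)
    (hact : ∀ g : G, ∀ ω ∈ Ω, act g ω ∈ Ω)
    (hdecomp : ∀ g : G, ∀ ω ∈ Ω, g * ω = act g ω * (coc g ω : G))
    (s₀ : ℝ) (hs₀ : 0 < s₀) (I : ℝ)
    (hI : ∫⁻ ω in Ω, ENNReal.ofReal (Real.exp (s₀ * ℓ ω)) ∂μ = ENNReal.ofReal I)
    (hmin : ∀ ω ∈ Ω, ∀ γ : Γ, ℓ ω ≤ ℓ (ω * (γ : G)) + 1) :
    ∃ C : ℝ, 0 < C ∧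
      ∀ s : ℝ, 0 < s → s ≤ s₀ / 2 → ∀ g : G,
        ∫⁻ ω in Ω, ENNReal.ofReal (Real.exp (s * ℓ (coc g ω : G))) ∂μ ≤
          ENNReal.ofReal (C * Real.exp (2 * s * ℓ g)) :=
  cocycle_exponentially_integrable_general μ ℓ hℓ Γ Ω hΩmeas act coc hact hdecomp s₀ I hI hmin
end
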